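/- Let D be a Dedekind domain. The ring D(X), the localization of D[X] at polynomials with unit content ideal, is a principal ideal domain. -/

import Mathlib

/-!
For `f ≠ 0` the content ideal `c(f)` is invertible, say `c(f) J = (b)` with `b ≠ 0`. Listing
generators `y₀, …, yₘ` of `J`, the polynomial `u = Σ yᵢ X^(i(deg f + 1))` has `c(u) = J`, and the
shifted copies `yᵢ X^(i(deg f + 1)) f` have disjoint supports, so `c(uf) = c(f) J = (b)`. Hence
`uf = b s` with `c(s) = (1)`, and for `a ∈ c(f)` also `au = b v`; cancelling `b` gives `a s = v f`.
Thus `f D(X) = c(f) D(X)` for every `f`. An ideal `Q` of `D(X)` is then the extension of the ideal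
of `D` spanned by the contents of the elements of `Q ∩ D[X]`; that ideal is finitely generated,
hence the content of a single polynomial, which generates `Q`.
-/

/-- The content ideal of a polynomial: the ideal generated by its coefficients. -/
noncomputable def contentIdeal {D : Type*} [CommRing D] (f : Polynomial D) : Ideal D :=
  Ideal.span (Set.range f.coeff)

open scoped Polynomial
open Polynomial (C X)

theorem contentIdeal_eq_polynomial_contentIdeal {R : Type*} [CommRing R] (f : R[X]) :
    contentIdeal f = f.contentIdeal :=
  le_antisymm (Ideal.span_le.mpr <| Set.range_subset_iff.mpr f.coeff_mem_contentIdeal)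
    (Ideal.span_mono fun _ hc =>
      let ⟨n, _, hn⟩ := Polynomial.mem_coeffs_iff.mp hc
      ⟨n, hn.symm⟩)

namespace Polynomial

section CommSemiring

variable {R : Type*} [CommSemiring R]

theorem contentIdeal_le_iff {p : R[X]} {I : Ideal R} :
    p.contentIdeal ≤ I ↔ ∀ n, p.coeff n ∈ I := by
  refine ⟨fun h n => h (p.coeff_mem_contentIdeal n), fun h => ?_⟩
  rw [contentIdeal_def, Ideal.span_le]
  intro c hc
  obtain ⟨n, -, rfl⟩ := mem_coeffs_iff.mp hc
  exact h n

theorem C_dvd_of_contentIdeal_le_span_singleton {p : R[X]} {r : R}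
    (h : p.contentIdeal ≤ Ideal.span {r}) : C r ∣ p :=
  (C_dvd_iff_dvd_coeff r p).mpr fun n =>
    Ideal.mem_span_singleton.mp (h (p.coeff_mem_contentIdeal n))

theorem contentIdeal_C_mul (r : R) (p : R[X]) :
    (C r * p).contentIdeal = Ideal.span {r} * p.contentIdeal := by
  refine le_antisymm ((contentIdeal_mul_le_mul_contentIdeal _ _).trans_eq
    (by rw [contentIdeal_C])) ?_
  rw [Ideal.span_singleton_mul_le_iff]
  refine fun z hz => contentIdeal_le_iff
    (I := Submodule.comap (LinearMap.mulLeft R r) (C r * p).contentIdeal).mpr (fun n => ?_) hz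
  simpa [← coeff_C_mul] using (C r * p).coeff_mem_contentIdeal n

theorem contentIdeal_add_mul_X_pow (p q : R[X]) {n : ℕ} (hn : p.natDegree < n) :
    (p + q * X ^ n).contentIdeal = p.contentIdeal ⊔ q.contentIdeal := by
  refine le_antisymm (contentIdeal_le_iff.mpr fun k => ?_) (sup_le ?_ ?_)
  · rw [coeff_add, coeff_mul_X_pow']
    refine add_mem (Ideal.mem_sup_left (p.coeff_mem_contentIdeal k)) ?_
    split_ifs
    · exact Ideal.mem_sup_right (q.coeff_mem_contentIdeal _)
    · exact zero_mem _
  · refine contentIdeal_le_iff.mpr fun k => ?_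
    rcases lt_or_ge k n with hk | hk
    · have := (p + q * X ^ n).coeff_mem_contentIdeal k
      rwa [coeff_add, coeff_mul_X_pow', if_neg hk.not_ge, add_zero] at this
    · simp [coeff_eq_zero_of_natDegree_lt (hn.trans_le hk)]
  · refine contentIdeal_le_iff.mpr fun k => ?_
    have := (p + q * X ^ n).coeff_mem_contentIdeal (k + n)
    rwa [coeff_add, coeff_mul_X_pow', if_pos (n.le_add_left k), Nat.add_sub_cancel,
      coeff_eq_zero_of_natDegree_lt (hn.trans_le (n.le_add_left k)), zero_add] at this

theorem exists_contentIdeal_eq_and_contentIdeal_mul_eq (p : R[X]) {J : Ideal R} (hJ : J.FG) :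
    ∃ u : R[X], u.contentIdeal = J ∧ (u * p).contentIdeal = p.contentIdeal * J := by
  classical
  obtain ⟨s, rfl⟩ := hJ
  induction s using Finset.induction with
  | empty => exact ⟨0, by simp⟩
  | insert y s _ ih =>
    obtain ⟨u, hu, hup⟩ := ih
    refine ⟨C y + u * X ^ (p.natDegree + 1), ?_, ?_⟩
    · rw [contentIdeal_add_mul_X_pow _ _ ((natDegree_C y).trans_lt (Nat.succ_pos _)),
        contentIdeal_C, hu, Finset.coe_insert, Ideal.span_insert]
    · rw [add_mul, mul_assoc, mul_comm (X ^ _), ← mul_assoc,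
        contentIdeal_add_mul_X_pow _ _ (Nat.lt_succ_of_le (natDegree_C_mul_le y p)),
        contentIdeal_C_mul, hup, Finset.coe_insert, Ideal.span_insert, Ideal.mul_sup, mul_comm]

end CommSemiring

theorem exists_C_mul_eq_mul_of_mem_contentIdeal {R : Type*} [CommRing R] [IsDedekindDomain R]
    {f : R[X]} {a : R} (ha : a ∈ f.contentIdeal) :
    ∃ s v : R[X], s.contentIdeal = ⊤ ∧ C a * s = v * f := by
  rcases eq_or_ne f 0 with rfl | hf
  · obtain rfl : a = 0 := by simpa using ha
    exact ⟨1, 0, contentIdeal_one, by simp⟩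
  obtain ⟨b, hbf, hb⟩ := Submodule.exists_mem_ne_zero_of_ne_bot
    (mt (contentIdeal_eq_bot_iff f).mp hf)
  obtain ⟨J, hJ⟩ : f.contentIdeal ∣ Ideal.span {b} :=
    Ideal.dvd_iff_le.mpr ((Ideal.span_singleton_le_iff_mem _).mpr hbf)
  obtain ⟨u, hu, huf⟩ :=
    exists_contentIdeal_eq_and_contentIdeal_mul_eq f (IsNoetherian.noetherian J)
  rw [← hJ] at huf
  obtain ⟨s, hs⟩ := C_dvd_of_contentIdeal_le_span_singleton huf.le
  have hs_top : s.contentIdeal = ⊤ := (Ideal.span_singleton_mul_right_inj hb).mp <| by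
    rw [Ideal.mul_top, ← contentIdeal_C_mul, ← hs, huf]
  obtain ⟨v, hv⟩ : C b ∣ C a * u := by
    refine C_dvd_of_contentIdeal_le_span_singleton ?_
    rw [contentIdeal_C_mul, hu, hJ]
    exact Ideal.mul_mono_left ((Ideal.span_singleton_le_iff_mem _).mpr ha)
  refine ⟨s, v, hs_top, mul_left_cancel₀ (C_ne_zero.mpr hb) ?_⟩
  calc C b * (C a * s) = C a * (C b * s) := by ring
    _ = C b * (v * f) := by rw [← hs, ← mul_assoc, hv, mul_assoc]

end Polynomial

section Localization

variable {R : Type*} [CommRing R] [IsDedekindDomain R] {M : Submonoid R[X]}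
  {L : Type*} [CommRing L] [Algebra R[X] L] [IsLocalization M L]

theorem span_algebraMap_eq_map_contentIdeal (hM : ∀ g : R[X], g.contentIdeal = ⊤ → g ∈ M)
    (f : R[X]) :
    Ideal.span {algebraMap R[X] L f} = (f.contentIdeal.map C).map (algebraMap R[X] L) := by
  refine le_antisymm ?_ ?_
  · rw [Ideal.span_singleton_le_iff_mem]
    exact Ideal.mem_map_of_mem _ (Ideal.mem_map_C_iff.mpr f.coeff_mem_contentIdeal)
  · rw [Ideal.map_le_iff_le_comap, Ideal.map_le_iff_le_comap]
    intro a ha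
    obtain ⟨s, v, hs, hav⟩ := f.exists_C_mul_eq_mul_of_mem_contentIdeal ha
    have hs_unit : IsUnit (algebraMap R[X] L s) := IsLocalization.map_units L (⟨s, hM s hs⟩ : M)
    rw [Ideal.mem_comap, Ideal.mem_comap, ← Ideal.mul_unit_mem_iff_mem _ hs_unit, ← map_mul,
      hav, map_mul]
    exact Ideal.mul_mem_left _ _ (Ideal.mem_span_singleton_self _)

theorem isPrincipalIdealRing_of_contentIdeal_eq_top_mem
    (hM : ∀ g : R[X], g.contentIdeal = ⊤ → g ∈ M) : IsPrincipalIdealRing L := by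
  refine ⟨fun Q => ?_⟩
  set P := Q.comap (algebraMap R[X] L)
  obtain ⟨u, hu, -⟩ := Polynomial.exists_contentIdeal_eq_and_contentIdeal_mul_eq 1
    (IsNoetherian.noetherian (⨆ f ∈ P, f.contentIdeal))
  refine ⟨⟨algebraMap R[X] L u, ?_⟩⟩
  calc Q = P.map (algebraMap R[X] L) := (IsLocalization.map_under M L Q).symm
    _ = ⨆ f ∈ P, Ideal.span {algebraMap R[X] L f} := by
      conv_lhs => rw [← Submodule.span_eq P, Submodule.span_eq_iSup_of_singleton_spans]
      simp only [Ideal.map_iSup, Ideal.map_span, Set.image_singleton, SetLike.mem_coe]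
    _ = ((⨆ f ∈ P, f.contentIdeal).map C).map (algebraMap R[X] L) := by
      simp only [Ideal.map_iSup, span_algebraMap_eq_map_contentIdeal hM]
    _ = Ideal.span {algebraMap R[X] L u} := by rw [← hu, span_algebraMap_eq_map_contentIdeal hM]

end Localization

theorem DX_isPrincipalIdealDomain_general {D : Type*} [CommRing D]
    [IsDedekindDomain D] :
    IsPrincipalIdealRing
        (Localization (Submonoid.closure {g : Polynomial D | contentIdeal g = ⊤})) ∧
      IsDomain (Localization (Submonoid.closure {g : Polynomial D | contentIdeal g = ⊤})) := by
  have hM : ∀ g : D[X], g.contentIdeal = ⊤ → g ∈ Submonoid.closure {g | contentIdeal g = ⊤} :=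
    fun g hg => Submonoid.subset_closure ((contentIdeal_eq_polynomial_contentIdeal g).trans hg)
  refine ⟨isPrincipalIdealRing_of_contentIdeal_eq_top_mem hM,
    IsLocalization.isDomain_localization (Submonoid.closure_le.mpr fun g hg =>
      mem_nonZeroDivisors_of_ne_zero ?_)⟩
  rintro rfl
  simp [contentIdeal_eq_polynomial_contentIdeal] at hg

/-- Claborn: for a Dedekind domain `D`, the ring `D(X)`, the localization of `D[X]` at the
polynomials with unit content ideal, is a principal ideal domain. -/
theorem DX_isPrincipalIdealDomain {D : Type*} [CommRing D] [IsDomain D]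
    [IsDedekindDomain D] :
    IsPrincipalIdealRing
        (Localization (Submonoid.closure {g : Polynomial D | contentIdeal g = ⊤})) ∧
      IsDomain (Localization (Submonoid.closure {g : Polynomial D | contentIdeal g = ⊤})) :=
  DX_isPrincipalIdealDomain_general
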